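/- arXiv:2209.13878 — 4 statements merged into one kernel-verified Lean document; each statement's English description precedes it below -/
import Mathlib

section
/- Let ε ∈ (0, 1/4), δ = ε²/16, and let p↓, p↑ ∈ [0,1] satisfy p↑ = (1+δ)·p↓ and p↓ ≤ ε/4. Then for every real Δ with 0 ≤ Δ < 1/ε, one has (1 - p↑)^Δ ≥ (1 - ε/2)·(1 - p↓)^Δ. -/
theorem stmt_0 (ε δ pd pu : ℝ) (hε : 0 < ε) (hε4 : ε < 1/4)
    (hδ : δ = ε^2/16)
    (hpd0 : 0 ≤ pd) (hpd1 : pd ≤ 1) (hpu0 : 0 ≤ pu) (hpu1 : pu ≤ 1)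
    (hpu : pu = (1+δ)*pd) (hpdε : pd ≤ ε/4) :
    ∀ Δ : ℝ, 0 ≤ Δ → Δ < 1/ε →
      (1 - pu) ^ Δ ≥ (1 - ε/2) * (1 - pd) ^ Δ := by
  intro Δ hΔ0 hΔ1
  have hpdlt : pd < 1/16 := lt_of_le_of_lt hpdε (by nlinarith)
  have h1pd : (0:ℝ) < 1 - pd := by linarith
  have hδ0 : 0 ≤ δ := by rw [hδ]; positivity
  have hpu' : 1 - pu = (1 - pd) - δ * pd := by rw [hpu]; ring
  have hδpd : δ * pd ≤ ε^3/64 := by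
    rw [hδ]; nlinarith [sq_nonneg ε, mul_nonneg (mul_nonneg hε.le hε.le) hpd0]
  have h1pu : (0:ℝ) < 1 - pu := by
    rw [hpu']; nlinarith
  set r : ℝ := (1 - pu) / (1 - pd) with hr
  have hr0 : 0 < r := div_pos h1pu h1pd
  have hr1 : r ≤ 1 := by
    rw [hr, div_le_one h1pd, hpu']
    nlinarith [mul_nonneg hδ0 hpd0]
  have hrlb : 1 - ε^3/48 ≤ r := by
    rw [hr, le_div_iff₀ h1pd, hpu']
    nlinarith [mul_nonneg hδ0 hpd0]
  -- r^Δ ≥ r^(1/ε)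
  have hmono : r ^ (1/ε) ≤ r ^ Δ :=
    Real.rpow_le_rpow_of_exponent_ge hr0 hr1 hΔ1.le
  have hε1 : (1:ℝ) ≤ 1/ε := by
    rw [le_div_iff₀ hε]; linarith
  have hs : -1 ≤ -(ε^3/48) := by nlinarith
  have hbern : 1 + (1/ε) * (-(ε^3/48)) ≤ (1 + (-(ε^3/48))) ^ (1/ε) :=
    one_add_mul_self_le_rpow_one_add hs hε1
  have hbase0 : (0:ℝ) ≤ 1 + (-(ε^3/48)) := by nlinarith
  have h2 : (1 + (-(ε^3/48))) ^ (1/ε) ≤ r ^ (1/ε) :=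
    Real.rpow_le_rpow hbase0 (by linarith [hrlb]) (by positivity)
  have hval : 1 + (1/ε) * (-(ε^3/48)) = 1 - ε^2/48 := by
    field_simp; ring
  have hkey : 1 - ε/2 ≤ r ^ Δ := by
    calc 1 - ε/2 ≤ 1 - ε^2/48 := by nlinarith
    _ = 1 + (1/ε) * (-(ε^3/48)) := hval.symm
    _ ≤ (1 + (-(ε^3/48))) ^ (1/ε) := hbern
    _ ≤ r ^ (1/ε) := h2
    _ ≤ r ^ Δ := hmono
  have hsplit : (1 - pu) ^ Δ = r ^ Δ * (1 - pd) ^ Δ := by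
    rw [hr, Real.div_rpow h1pu.le h1pd.le]
    field_simp
  rw [ge_iff_le, hsplit]
  apply mul_le_mul_of_nonneg_right hkey (Real.rpow_nonneg h1pd.le Δ)
end

section
/- Let ε ∈ (0, 1/4), δ = ε²/16, and let p↓, p↑ ∈ [0,1] satisfy p↑ = (1+δ)·p↓ and p↓ ≤ ε/4. Then for every real Δ ≥ 0, one has (1 - p↑)^((1-ε)·Δ) ≥ (1 - p↓)^Δ. -/
theorem stmt_2 (ε δ pd pu : ℝ) (hε : 0 < ε) (hε4 : ε < 1/4)
    (hδ : δ = ε^2/16)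
    (hpd0 : 0 ≤ pd) (hpd1 : pd ≤ 1) (hpu0 : 0 ≤ pu) (hpu1 : pu ≤ 1)
    (hpu : pu = (1+δ)*pd) (hpdε : pd ≤ ε/4) :
    ∀ Δ : ℝ, 0 ≤ Δ →
      (1 - pu) ^ ((1-ε)*Δ) ≥ (1 - pd) ^ Δ := by
  intro Δ hΔ
  have hpd' : pd < 1 := by nlinarith
  have hpu' : pu < 1 := by nlinarith
  have h1u : (0:ℝ) < 1 - pu := by linarith
  have h1d : (0:ℝ) < 1 - pd := by linarith
  -- key: (1 - pu)^(1-ε) ≥ 1 - pd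
  have hlogu : -Real.log (1 - pu) ≤ pu / (1 - pu) := by
    have := Real.log_le_sub_one_of_pos (x := (1 - pu)⁻¹) (by positivity)
    rw [Real.log_inv] at this
    have : -Real.log (1 - pu) ≤ (1 - pu)⁻¹ - 1 := this
    rw [div_eq_mul_inv]
    nlinarith [this, mul_pos h1u (inv_pos.mpr h1u),
      mul_inv_cancel₀ (ne_of_gt h1u)]
  have hlogd : Real.log (1 - pd) ≤ -pd := by
    have := Real.log_le_sub_one_of_pos h1d
    linarith
  have hkey : (1 - ε) * Real.log (1 - pu) ≥ Real.log (1 - pd) := by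
    have hε1 : (0:ℝ) < 1 - ε := by linarith
    have h2 : (1 - ε) * (pu / (1 - pu)) ≤ pd := by
      rw [mul_div_assoc', div_le_iff₀ h1u]
      nlinarith [sq_nonneg ε, sq_nonneg pd, mul_nonneg hpd0 hε.le]
    have h3 : (1 - ε) * (-Real.log (1 - pu)) ≤ (1 - ε) * (pu / (1 - pu)) :=
      mul_le_mul_of_nonneg_left hlogu hε1.le
    nlinarith
  have hbase : (1 - pd) ≤ (1 - pu) ^ ((1:ℝ) - ε) := by
    rw [Real.rpow_def_of_pos h1u, mul_comm]
    calc (1 - pd) = Real.exp (Real.log (1 - pd)) := (Real.exp_log h1d).symm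
      _ ≤ Real.exp ((1 - ε) * Real.log (1 - pu)) := Real.exp_le_exp.mpr hkey
  calc (1 - pd) ^ Δ ≤ ((1 - pu) ^ ((1:ℝ) - ε)) ^ Δ :=
        Real.rpow_le_rpow h1d.le hbase hΔ
    _ = (1 - pu) ^ ((1 - ε) * Δ) := by
        rw [← Real.rpow_mul h1u.le]
end

section
/- Let ε ∈ (0, 1/4), δ = ε²/16, and let p↓, p↑ ∈ [0,1] satisfy 1 - p↑ = (1 - p↓)/(1+δ) and p↓ ≥ 3ε/16. Then for every real Δ ≥ 0, one has (1 - p↑)^((1-ε)·Δ) ≥ (1 - p↓)^Δ. -/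
theorem stmt_3 (ε δ pd pu : ℝ) (hε : 0 < ε) (hε4 : ε < 1/4)
    (hδ : δ = ε^2/16)
    (hpd0 : 0 ≤ pd) (hpd1 : pd ≤ 1) (hpu0 : 0 ≤ pu) (hpu1 : pu ≤ 1)
    (hrel : 1 - pu = (1 - pd)/(1+δ)) (hpdlb : 3*ε/16 ≤ pd) :
    ∀ Δ : ℝ, 0 ≤ Δ →
      (1 - pu) ^ ((1-ε)*Δ) ≥ (1 - pd) ^ Δ := by
  intro Δ hΔ
  have hδpos : 0 < δ := by rw [hδ]; positivity
  by_cases hpd : pd = 1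
  · have h1 : (1 : ℝ) - pd = 0 := by rw [hpd]; ring
    have h2 : (1 : ℝ) - pu = 0 := by rw [hrel, h1]; simp
    rcases eq_or_lt_of_le hΔ with h | h
    · rw [← h]; simp
    · rw [h1, h2, Real.zero_rpow (ne_of_gt h), Real.zero_rpow (ne_of_gt (by nlinarith))]
  · have h1 : 0 < 1 - pd := by
      rcases lt_or_eq_of_le hpd1 with h | h
      · linarith
      · exact absurd h hpd
    have hpu : 0 < 1 - pu := by rw [hrel]; positivity
    rw [ge_iff_le, Real.rpow_def_of_pos h1, Real.rpow_def_of_pos hpu, Real.exp_le_exp]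
    have hlogpu : Real.log (1 - pu) = Real.log (1 - pd) - Real.log (1 + δ) := by
      rw [hrel, Real.log_div (ne_of_gt h1) (by positivity)]
    have hA : Real.log (1 + δ) ≤ δ := by
      have := Real.log_le_sub_one_of_pos (show (0:ℝ) < 1 + δ by linarith)
      linarith
    have hM0 : 0 ≤ Real.log (1 + δ) := Real.log_nonneg (by linarith)
    have hB : Real.log (1 - pd) ≤ -pd := by
      have := Real.log_le_sub_one_of_pos h1
      linarith
    have hkey : Real.log (1 - pd) ≤ (1 - ε) * (Real.log (1 - pd) - Real.log (1 + δ)) := by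
      nlinarith [mul_le_mul_of_nonneg_left hB hε.le, mul_le_mul_of_nonneg_left hA (by linarith : (0:ℝ) ≤ 1 - ε)]
    rw [hlogpu]
    nlinarith [mul_le_mul_of_nonneg_left hkey hΔ]
end

section
/- Let δ = ε²/16 with ε ∈ (0, 1/4), and let p↓, p↑ ∈ (0,1) satisfy 1 - p↑ = (1 - p↓)/(1+δ). Then for every positive integer m with m ≤ 1/ε, the quantity ξ := 1 - ((1 - p↑)/(1 - p↓))^(m-1) satisfies 0 ≤ ξ ≤ p↓. -/
theorem stmt_7 (ε δ pd pu : ℝ) (hε : 0 < ε) (hε4 : ε < 1/4) (hδ : δ = ε^2/16)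
    (hpd : 0 < pd) (hpd1 : pd < 1) (hpu : 0 < pu) (hpu1 : pu < 1)
    (hrel : 1 - pu = (1 - pd)/(1+δ)) (hpdlb : 3*ε/16 ≤ pd)
    (m : ℕ) (hm : 1 ≤ m) (hmε : (m:ℝ) ≤ 1/ε) :
    0 ≤ 1 - ((1-pu)/(1-pd))^(m-1) ∧ 1 - ((1-pu)/(1-pd))^(m-1) ≤ pd := by
  have hδ0 : 0 ≤ δ := by rw [hδ]; positivity
  have hδ1 : δ < 1 := by nlinarith
  have h1δ : (0:ℝ) < 1 + δ := by linarith
  have hpd' : (0:ℝ) < 1 - pd := by linarith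
  have hr : (1-pu)/(1-pd) = 1/(1+δ) := by
    rw [hrel]; field_simp
  rw [hr]
  set n := m - 1 with hn'
  have hn : (n:ℝ) ≤ 1/ε - 1 := by
    rw [hn', Nat.cast_sub hm]; push_cast; linarith
  have hnδ : (n:ℝ) * δ ≤ pd := by
    have h0 : (0:ℝ) ≤ (n:ℝ) := Nat.cast_nonneg n
    have h1 : (n:ℝ) * δ ≤ (1/ε - 1) * δ := mul_le_mul_of_nonneg_right hn hδ0
    have h2 : (1/ε) * ε = 1 := one_div_mul_cancel hε.ne'
    nlinarith [sq_nonneg ε]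
  constructor
  · have h1 : (1/(1+δ))^n ≤ 1 :=
      pow_le_one₀ (by positivity) (by rw [div_le_one h1δ]; linarith)
    linarith
  · have key : (1-pd) * (1+δ)^n ≤ 1 := by
      have h1 : 1 - (n:ℝ)*δ ≤ (1-δ)^n := by
        have := one_add_mul_le_pow (a := -δ) (by linarith : (-2:ℝ) ≤ -δ) n
        have h' : 1 + (n:ℝ) * (-δ) ≤ (1 + -δ)^n := this
        calc 1 - (n:ℝ)*δ = 1 + (n:ℝ)*(-δ) := by ring
          _ ≤ (1 + -δ)^n := h'
          _ = (1-δ)^n := by ring_nf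
      have h2 : (1-δ)^n * (1+δ)^n ≤ 1 := by
        rw [← mul_pow]
        exact pow_le_one₀ (by nlinarith) (by nlinarith)
      have hp : (0:ℝ) < (1+δ)^n := pow_pos h1δ n
      nlinarith
    have : 1 - pd ≤ (1/(1+δ))^n := by
      rw [div_pow, one_pow, le_div_iff₀ (pow_pos h1δ n)]
      exact key
    linarith
end
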